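/- If Δ is a (d-1)-dimensional simplicial complex with symmetric h-vector (h_r = h_{d-r} for all r), then the h-polynomial of its interval subdivision satisfies h(Int(Δ), t) = Σ_{j=0}^{⌊d/2⌋} h_j · 𝔹^+_{d+1, j+1}(t), where 𝔹^+_{n,j}(t) = B^+_{n,j}(t) + B^+_{n,n-j+1}(t) if j ≠ (n+1)/2 and 𝔹^+_{n,j}(t) = B^+_{n,j}(t) if j = (n+1)/2; in particular h(Int(Δ), t) is a symmetric polynomial. -/
import Mathlib


open Finset Polynomial

/-- A signed permutation in the hyperoctahedral group `B_n`: a bijection of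
`{±1,…,±n}` with `σ(-i) = -σ(i)`, encoded by its values on `1,…,n`
(extended by `0` elsewhere). -/
structure SignedPerm (n : ℕ) where
  toFun : ℕ → ℤ
  mem_abs : ∀ i ∈ Finset.Icc 1 n, (toFun i).natAbs ∈ Finset.Icc 1 n
  inj_abs : ∀ i ∈ Finset.Icc 1 n, ∀ j ∈ Finset.Icc 1 n,
      (toFun i).natAbs = (toFun j).natAbs → i = j
  eq_zero : ∀ i, i ∉ Finset.Icc 1 n → toFun i = 0

/-- The extended word `σ_0 σ_1 ⋯ σ_n σ_{n+1}` with `σ_0 = 0` and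
`σ_{n+1} = -∞` (modeled by `-(n+1)`, which is smaller than every entry). -/
def word {n : ℕ} (σ : SignedPerm n) (i : ℕ) : ℤ :=
  if i ≤ n then σ.toFun i else -(n + 1 : ℤ)

/-- The number of type-B descents: `|{i ∈ [0,n-1] : σ_i > σ_{i+1}}|`, `σ_0 = 0`. -/
def desB {n : ℕ} (σ : SignedPerm n) : ℕ :=
  ((Finset.range n).filter (fun i => word σ (i + 1) < word σ i)).card

/-- `a` is the starting position of a slide of `σ`, i.e. of a maximal
decreasing run of length at least 2 in the extended word. -/
def IsSlideStart {n : ℕ} (σ : SignedPerm n) (a : ℕ) : Prop :=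
  a ≤ n ∧ (a = 0 ∨ word σ (a - 1) < word σ a) ∧ word σ (a + 1) < word σ a

/-- The number of slides of `σ` (maximal decreasing runs of length ≥ 2 in the
extended word), counted via their starting positions. -/
def slides {n : ℕ} (σ : SignedPerm n) : ℕ :=
  ((Finset.range (n + 1)).filter (fun a =>
      (a = 0 ∨ word σ (a - 1) < word σ a) ∧ word σ (a + 1) < word σ a)).card

/-- `B^+(n,j,r)`: the number of `σ ∈ B_n` with `σ_n > 0`, `σ_1 = j` and
exactly `r` type-B descents (`j`, `r` integers; the count is `0` for `r < 0`). -/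
noncomputable def BP (n : ℕ) (j r : ℤ) : ℕ :=
  Nat.card {σ : SignedPerm n // 0 < σ.toFun n ∧ σ.toFun 1 = j ∧ (desB σ : ℤ) = r}

/-- `B^{++}(n,k)`: number of `σ ∈ B_n` with `σ_1 > 0`, `σ_n > 0`, `k` descents. -/
noncomputable def BPP (n k : ℕ) : ℕ :=
  Nat.card {σ : SignedPerm n // 0 < σ.toFun 1 ∧ 0 < σ.toFun n ∧ desB σ = k}

/-- `B^{-+}(n,k)`: number of `σ ∈ B_n` with `σ_1 < 0`, `σ_n > 0`, `k` descents. -/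
noncomputable def BMP (n k : ℕ) : ℕ :=
  Nat.card {σ : SignedPerm n // σ.toFun 1 < 0 ∧ 0 < σ.toFun n ∧ desB σ = k}

/-- `b^{++}(n,k,s)`: number of `σ ∈ B_n` with `σ_1 > 0`, `σ_n > 0`,
`k` descents and `s+1` slides. -/
noncomputable def bPP (n k s : ℕ) : ℕ :=
  Nat.card {σ : SignedPerm n //
    0 < σ.toFun 1 ∧ 0 < σ.toFun n ∧ desB σ = k ∧ slides σ = s + 1}

/-- `b^{-+}(n,k,s)`: number of `σ ∈ B_n` with `σ_1 < 0`, `σ_n > 0`,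
`k` descents and `s+1` slides. -/
noncomputable def bMP (n k s : ℕ) : ℕ :=
  Nat.card {σ : SignedPerm n //
    σ.toFun 1 < 0 ∧ 0 < σ.toFun n ∧ desB σ = k ∧ slides σ = s + 1}

/-- Number of `σ ∈ B_n` with `σ_n > 0` and `k` descents. -/
noncomputable def BplusCount (n k : ℕ) : ℕ :=
  Nat.card {σ : SignedPerm n // 0 < σ.toFun n ∧ desB σ = k}

/-- Number of `σ ∈ B_n` with `k` descents. -/
noncomputable def Ball (n k : ℕ) : ℕ := Nat.card {σ : SignedPerm n // desB σ = k}

/-- The `j`-Eulerian polynomial of type `B^+`: `B^+_{n,j}(t) = Σ_r B^+(n,j,r) t^r`. -/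
noncomputable def BPpoly (n : ℕ) (j : ℤ) : Polynomial ℤ :=
  ∑ r ∈ Finset.range (n + 1), Polynomial.C (BP n j (r : ℤ) : ℤ) * Polynomial.X ^ r

/-- The type-B Eulerian polynomial `B_n(t) = Σ_{σ ∈ B_n} t^{des_B σ}`. -/
noncomputable def Bfullpoly (n : ℕ) : Polynomial ℤ :=
  ∑ k ∈ Finset.range (n + 1), Polynomial.C (Ball n k : ℤ) * Polynomial.X ^ k

/-- The symmetrized `j`-Eulerian polynomial `𝔹^+_{n,j}(t)`. -/
noncomputable def BsymPoly (n j : ℕ) : Polynomial ℤ :=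
  if 2 * j = n + 1 then BPpoly n (j : ℤ)
  else BPpoly n (j : ℤ) + BPpoly n ((n : ℤ) + 1 - j)


/-! ### Auxiliary machinery -/

lemma SignedPerm.ext' {n : ℕ} {σ τ : SignedPerm n} (hh : σ.toFun = τ.toFun) : σ = τ := by
  cases σ; cases τ; simp_all

/-- The value complement `v ↦ sign(v) (n+1-|v|)`. -/
def valflip (n : ℕ) (v : ℤ) : ℤ :=
  if 0 < v then (n : ℤ) + 1 - v else if v < 0 then -(n : ℤ) - 1 - v else 0

lemma valflip_natAbs {n : ℕ} {v : ℤ} (h1 : 1 ≤ v.natAbs) (h2 : v.natAbs ≤ n) :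
    (valflip n v).natAbs = n + 1 - v.natAbs := by
  unfold valflip; split_ifs <;> omega

lemma valflip_valflip {n : ℕ} {v : ℤ} (h2 : v.natAbs ≤ n) :
    valflip n (valflip n v) = v := by
  unfold valflip; split_ifs <;> omega

lemma valflip_pos {n : ℕ} {v : ℤ} (h1 : 0 < v) (h2 : v.natAbs ≤ n) :
    0 < valflip n v := by
  unfold valflip; split_ifs <;> omega

/-- The complementation involution on signed permutations. -/
def SignedPerm.flip {n : ℕ} (σ : SignedPerm n) : SignedPerm n where
  toFun i := if i ∈ Finset.Icc 1 n then valflip n (σ.toFun i) else 0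
  mem_abs i hi := by
    have h := σ.mem_abs i hi
    rw [Finset.mem_Icc] at h
    show (if i ∈ Finset.Icc 1 n then valflip n (σ.toFun i) else 0).natAbs ∈ Finset.Icc 1 n
    rw [if_pos hi, Finset.mem_Icc, valflip_natAbs h.1 h.2]
    omega
  inj_abs i hi j hj hij := by
    have h1 := σ.mem_abs i hi; have h2 := σ.mem_abs j hj
    rw [Finset.mem_Icc] at h1 h2
    simp only [if_pos hi, if_pos hj] at hij
    rw [valflip_natAbs h1.1 h1.2, valflip_natAbs h2.1 h2.2] at hij
    exact σ.inj_abs i hi j hj (by omega)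
  eq_zero i hi := if_neg hi

lemma SignedPerm.flip_toFun {n : ℕ} (σ : SignedPerm n) (i : ℕ) :
    σ.flip.toFun i = if i ∈ Finset.Icc 1 n then valflip n (σ.toFun i) else 0 := rfl

lemma SignedPerm.flip_flip {n : ℕ} (σ : SignedPerm n) : σ.flip.flip = σ := by
  apply SignedPerm.ext'; funext i
  by_cases hi : i ∈ Finset.Icc 1 n
  · have h := σ.mem_abs i hi
    simp only [Finset.mem_Icc] at h
    rw [SignedPerm.flip_toFun, if_pos hi, SignedPerm.flip_toFun, if_pos hi,
      valflip_valflip h.2]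
  · rw [SignedPerm.flip_toFun, if_neg hi, σ.eq_zero i hi]

lemma word_flip {n : ℕ} (σ : SignedPerm n) {i : ℕ} (hi : i ≤ n) :
    word σ.flip i = valflip n (word σ i) := by
  unfold word
  rw [if_pos hi, if_pos hi, SignedPerm.flip_toFun]
  by_cases hh : i ∈ Finset.Icc 1 n
  · rw [if_pos hh]
  · rw [if_neg hh, σ.eq_zero i hh]; simp [valflip]

lemma word_abs_le {n : ℕ} (σ : SignedPerm n) {i : ℕ} (hi : i ≤ n) :
    (word σ i).natAbs ≤ n := by
  unfold word; rw [if_pos hi]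
  by_cases hh : i ∈ Finset.Icc 1 n
  · exact (Finset.mem_Icc.mp (σ.mem_abs i hh)).2
  · rw [σ.eq_zero i hh]; simp

lemma word_abs_pos {n : ℕ} (σ : SignedPerm n) {i : ℕ} (hi : i ∈ Finset.Icc 1 n) :
    1 ≤ (word σ i).natAbs := by
  unfold word
  rw [if_pos (Finset.mem_Icc.mp hi).2]
  exact (Finset.mem_Icc.mp (σ.mem_abs i hi)).1

lemma word_zero {n : ℕ} (σ : SignedPerm n) : word σ 0 = 0 := by
  unfold word
  rw [if_pos (Nat.zero_le n), σ.eq_zero 0 (by simp)]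

lemma desB_cast {n : ℕ} (σ : SignedPerm n) :
    (desB σ : ℤ) = ∑ i ∈ Finset.range n,
      (if word σ (i + 1) < word σ i then (1 : ℤ) else 0) := by
  rw [desB, Finset.card_filter]
  push_cast
  rfl

/-- The pointwise descent-flip identity. -/
lemma pointwise_flip (n : ℕ) (a b : ℤ) (ha : a.natAbs ≤ n) (hb : b.natAbs ≤ n)
    (hb0 : b ≠ 0) (hab : a = 0 → 0 < b) (hne : a ≠ b) :
    (if valflip n b < valflip n a then (1 : ℤ) else 0)
      + (if b < a then (1 : ℤ) else 0)
      = 1 + (if 0 < a then (1 : ℤ) else 0) - (if 0 < b then (1 : ℤ) else 0) := by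
  unfold valflip; split_ifs <;> omega

lemma desB_flip_add {n : ℕ} (σ : SignedPerm n) (h1 : 0 < σ.toFun 1)
    (hn : 0 < σ.toFun n) :
    (desB σ.flip : ℤ) + (desB σ : ℤ) = (n : ℤ) - 1 := by
  have hn1 : 1 ≤ n := by
    by_contra hc
    have : σ.toFun 1 = 0 := σ.eq_zero 1 (by simp [Finset.mem_Icc]; omega)
    omega
  have e0 : (if 0 < word σ 0 then (1 : ℤ) else 0) = 0 := by
    rw [word_zero]; simp
  have en : (if 0 < word σ n then (1 : ℤ) else 0) = 1 := by
    unfold word; rw [if_pos le_rfl, if_pos hn]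
  rw [desB_cast, desB_cast, ← Finset.sum_add_distrib]
  have key : ∀ i ∈ Finset.range n,
      (if word σ.flip (i + 1) < word σ.flip i then (1 : ℤ) else 0)
        + (if word σ (i + 1) < word σ i then (1 : ℤ) else 0)
      = 1 + ((if 0 < word σ i then (1 : ℤ) else 0)
          - (if 0 < word σ (i + 1) then (1 : ℤ) else 0)) := by
    intro i hi
    simp only [Finset.mem_range] at hi
    rw [word_flip σ (by omega : i ≤ n), word_flip σ (by omega : i + 1 ≤ n)]
    have hab : word σ i = 0 → 0 < word σ (i + 1) := by
      intro h0
      rcases Nat.eq_zero_or_pos i with hi0 | hi0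
      · subst hi0
        show 0 < word σ 1
        unfold word; rw [if_pos hn1]; exact h1
      · exfalso
        have := word_abs_pos σ (i := i) (by simp [Finset.mem_Icc]; omega)
        omega
    have hb0 : word σ (i + 1) ≠ 0 := by
      have := word_abs_pos σ (i := i + 1) (by simp [Finset.mem_Icc]; omega)
      omega
    have hne : word σ i ≠ word σ (i + 1) := by
      rcases Nat.eq_zero_or_pos i with hi0 | hi0
      · subst hi0
        rw [word_zero]
        exact fun e => hb0 e.symm
      · intro he
        have hmi : i ∈ Finset.Icc 1 n := by simp [Finset.mem_Icc]; omega
        have hmi1 : i + 1 ∈ Finset.Icc 1 n := by simp [Finset.mem_Icc]; omega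
        have habs : (σ.toFun i).natAbs = (σ.toFun (i + 1)).natAbs := by
          have e1 : word σ i = σ.toFun i := if_pos (by omega)
          have e2 : word σ (i + 1) = σ.toFun (i + 1) := if_pos (by omega)
          rw [← e1, ← e2, he]
        have := σ.inj_abs i hmi (i + 1) hmi1 habs
        omega
    have := pointwise_flip n (word σ i) (word σ (i + 1))
      (word_abs_le σ (by omega)) (word_abs_le σ (by omega)) hb0 hab hne
    omega
  rw [Finset.sum_congr rfl key, Finset.sum_add_distrib, Finset.sum_const,
    Finset.card_range, Finset.sum_range_sub' (fun i => if 0 < word σ i then (1 : ℤ) else 0),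
    e0, en]
  push_cast
  ring

lemma flip_mem {n : ℕ} (σ : SignedPerm n) (j r : ℤ) (hj1 : 1 ≤ j) (hjn : j ≤ (n : ℤ))
    (hyp : 0 < σ.toFun n ∧ σ.toFun 1 = j ∧ (desB σ : ℤ) = r) :
    0 < σ.flip.toFun n ∧ σ.flip.toFun 1 = (n : ℤ) + 1 - j ∧
      (desB σ.flip : ℤ) = (n : ℤ) - 1 - r := by
  obtain ⟨hn, h1, hdes⟩ := hyp
  have hn1 : 1 ≤ n := by
    by_contra hc
    have : σ.toFun n = 0 := σ.eq_zero n (by simp [Finset.mem_Icc]; omega)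
    omega
  have hmemn : n ∈ Finset.Icc 1 n := by simp [Finset.mem_Icc]; omega
  have hmem1 : (1 : ℕ) ∈ Finset.Icc 1 n := by simp [Finset.mem_Icc]; omega
  refine ⟨?_, ?_, ?_⟩
  · rw [SignedPerm.flip_toFun, if_pos hmemn]
    exact valflip_pos hn (Finset.mem_Icc.mp (σ.mem_abs n hmemn)).2
  · rw [SignedPerm.flip_toFun, if_pos hmem1, h1, valflip, if_pos (by omega : (0:ℤ) < j)]
  · have := desB_flip_add σ (by omega) hn
    omega

lemma BP_symm (n : ℕ) (j r : ℤ) (hj1 : 1 ≤ j) (hjn : j ≤ (n : ℤ)) :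
    BP n j r = BP n ((n : ℤ) + 1 - j) ((n : ℤ) - 1 - r) := by
  unfold BP
  apply Nat.card_congr
  refine ⟨fun x => ⟨x.1.flip, flip_mem x.1 j r hj1 hjn x.2⟩,
    fun x => ⟨x.1.flip, ?_⟩, fun x => ?_, fun x => ?_⟩
  · have := flip_mem x.1 ((n : ℤ) + 1 - j) ((n : ℤ) - 1 - r) (by omega) (by omega) x.2
    refine ⟨this.1, by rw [this.2.1]; ring, by rw [this.2.2]; ring⟩
  · exact Subtype.ext (SignedPerm.flip_flip x.1)
  · exact Subtype.ext (SignedPerm.flip_flip x.1)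

lemma BP_top (n : ℕ) (j : ℤ) : BP n j (n : ℤ) = 0 := by
  have hempty : IsEmpty {σ : SignedPerm n //
      0 < σ.toFun n ∧ σ.toFun 1 = j ∧ (desB σ : ℤ) = (n : ℤ)} := by
    constructor
    rintro ⟨σ, hn, -, hdes⟩
    have hd : desB σ = n := by exact_mod_cast hdes
    have hfil : (Finset.range n).filter (fun i => word σ (i + 1) < word σ i)
        = Finset.range n := by
      apply Finset.eq_of_subset_of_card_le (Finset.filter_subset _ _)
      rw [Finset.card_range]
      exact le_of_eq hd.symm
    have hall : ∀ i < n, word σ (i + 1) < word σ i := by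
      intro i hi
      have : i ∈ (Finset.range n).filter (fun i => word σ (i + 1) < word σ i) := by
        rw [hfil]; exact Finset.mem_range.mpr hi
      exact (Finset.mem_filter.mp this).2
    have hle : ∀ i, i ≤ n → word σ i ≤ 0 := by
      intro i
      induction i with
      | zero => intro _; rw [word_zero]
      | succ k ih =>
        intro hk
        exact le_of_lt (lt_of_lt_of_le (hall k (by omega)) (ih (by omega)))
    have hwn : word σ n ≤ 0 := hle n le_rfl
    unfold word at hwn
    rw [if_pos le_rfl] at hwn
    omega
  exact Nat.card_of_isEmpty

lemma pair_sum : ∀ (d : ℕ) (g : ℕ → Polynomial ℤ),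
    ∑ s ∈ Finset.range (d + 1), g s
      = ∑ j ∈ Finset.range (d / 2 + 1),
          (if 2 * j = d then g j else g j + g (d - j)) := by
  intro d
  induction d using Nat.strong_induction_on with
  | _ d ih =>
    match d with
    | 0 => intro g; simp
    | 1 =>
      intro g
      rw [Finset.sum_range_succ, Finset.sum_range_one]
      norm_num
    | (e + 2) =>
      intro g
      have hstep := ih e (by omega) (fun s => g (s + 1))
      have hL : ∑ s ∈ Finset.range (e + 3), g s
          = g 0 + ((∑ s ∈ Finset.range (e + 1), g (s + 1)) + g (e + 2)) := by
        rw [Finset.sum_range_succ' g (e + 2), Finset.sum_range_succ (fun s => g (s + 1)) (e + 1)]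
        ring
      have hdiv : (e + 2) / 2 + 1 = e / 2 + 1 + 1 := by omega
      rw [hL, hstep, hdiv, Finset.sum_range_succ' _ (e / 2 + 1)]
      have h0 : (if 2 * 0 = e + 2 then g 0 else g 0 + g (e + 2 - 0)) = g 0 + g (e + 2) := by
        rw [if_neg (by omega)]
        norm_num
      rw [h0]
      have hterm : ∀ j ∈ Finset.range (e / 2 + 1),
          (if 2 * (j + 1) = e + 2 then g (j + 1) else g (j + 1) + g (e + 2 - (j + 1)))
            = (if 2 * j = e then g (j + 1) else g (j + 1) + g (e - j + 1)) := by
        intro j hj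
        simp only [Finset.mem_range] at hj
        by_cases hc : 2 * j = e
        · rw [if_pos (by omega), if_pos hc]
        · rw [if_neg (by omega), if_neg hc]
          congr 1
          congr 1
          omega
      rw [Finset.sum_congr rfl hterm]
      abel

/-- If `Δ` is `(d-1)`-dimensional with symmetric `h`-vector, then the
`h`-polynomial of its interval subdivision, given by
`h_r(Int Δ) = Σ_{s=0}^{d} B^+(d+1,s+1,r) h_s`, satisfies
`h(Int Δ, t) = Σ_{j=0}^{⌊d/2⌋} h_j 𝔹^+_{d+1,j+1}(t)`; in particular it is
symmetric. -/
theorem stmt19 (d : ℕ) (h : ℕ → ℤ) (hsym : ∀ r ≤ d, h r = h (d - r)) :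
    (∑ r ∈ Finset.range (d + 1),
        Polynomial.C (∑ s ∈ Finset.range (d + 1),
          (BP (d + 1) ((s : ℤ) + 1) (r : ℤ) : ℤ) * h s) * Polynomial.X ^ r) =
      (∑ j ∈ Finset.range (d / 2 + 1),
        Polynomial.C (h j) * BsymPoly (d + 1) (j + 1)) ∧
    (∀ r ≤ d,
      (∑ s ∈ Finset.range (d + 1),
        (BP (d + 1) ((s : ℤ) + 1) (r : ℤ) : ℤ) * h s) =
      (∑ s ∈ Finset.range (d + 1),
        (BP (d + 1) ((s : ℤ) + 1) ((d : ℤ) - r) : ℤ) * h s)) := by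
  constructor
  · have step1 : (∑ r ∈ Finset.range (d + 1),
        Polynomial.C (∑ s ∈ Finset.range (d + 1),
          (BP (d + 1) ((s : ℤ) + 1) (r : ℤ) : ℤ) * h s) * Polynomial.X ^ r)
        = ∑ s ∈ Finset.range (d + 1),
            Polynomial.C (h s) * BPpoly (d + 1) ((s : ℤ) + 1) := by
      have expand : ∀ r : ℕ,
          Polynomial.C (∑ s ∈ Finset.range (d + 1),
            (BP (d + 1) ((s : ℤ) + 1) (r : ℤ) : ℤ) * h s) * Polynomial.X ^ r
          = ∑ s ∈ Finset.range (d + 1), Polynomial.C (h s) *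
              (Polynomial.C ((BP (d + 1) ((s : ℤ) + 1) (r : ℤ) : ℤ)) * Polynomial.X ^ r) := by
        intro r
        rw [map_sum, Finset.sum_mul]
        refine Finset.sum_congr rfl fun s _ => ?_
        rw [map_mul]
        ring
      rw [Finset.sum_congr rfl (fun r _ => expand r), Finset.sum_comm]
      refine Finset.sum_congr rfl fun s _ => ?_
      rw [← Finset.mul_sum]
      congr 1
      show _ = ∑ r ∈ Finset.range (d + 1 + 1),
        Polynomial.C ((BP (d + 1) ((s : ℤ) + 1) (r : ℤ) : ℤ)) * Polynomial.X ^ r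
      rw [Finset.sum_range_succ
        (fun r : ℕ => Polynomial.C ((BP (d + 1) ((s : ℤ) + 1) (r : ℤ) : ℤ)) * Polynomial.X ^ r)
        (d + 1), BP_top (d + 1) ((s : ℤ) + 1)]
      simp
    rw [step1, pair_sum d (fun s => Polynomial.C (h s) * BPpoly (d + 1) ((s : ℤ) + 1))]
    refine Finset.sum_congr rfl fun j hj => ?_
    rw [Finset.mem_range] at hj
    have hjd : j ≤ d := by omega
    unfold BsymPoly
    have c1 : ((j : ℤ) + 1) = ((j + 1 : ℕ) : ℤ) := by push_cast; ring
    by_cases hc : 2 * j = d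
    · rw [if_pos hc, if_pos (by omega : 2 * (j + 1) = (d + 1) + 1), c1]
    · rw [if_neg hc, if_neg (by omega : ¬ 2 * (j + 1) = (d + 1) + 1)]
      have hres : h (d - j) = h j := (hsym j hjd).symm
      have c2 : ((d - j : ℕ) : ℤ) + 1 = ((d + 1 : ℕ) : ℤ) + 1 - ((j + 1 : ℕ) : ℤ) := by
        omega
      rw [hres, ← mul_add, c1, c2]
  · intro r hr
    have key : ∀ s ∈ Finset.range (d + 1),
        (BP (d + 1) ((s : ℤ) + 1) (r : ℤ) : ℤ) * h s
          = (BP (d + 1) (((d + 1 - 1 - s : ℕ) : ℤ) + 1) ((d : ℤ) - (r : ℤ)) : ℤ)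
              * h (d + 1 - 1 - s) := by
      intro s hs
      rw [Finset.mem_range] at hs
      have hsd : s ≤ d := by omega
      have hidx : d + 1 - 1 - s = d - s := by omega
      rw [hidx, BP_symm (d + 1) ((s : ℤ) + 1) (r : ℤ) (by omega) (by push_cast; omega)]
      have e1 : ((d + 1 : ℕ) : ℤ) + 1 - ((s : ℤ) + 1) = ((d - s : ℕ) : ℤ) + 1 := by
        omega
      have e2 : ((d + 1 : ℕ) : ℤ) - 1 - (r : ℤ) = (d : ℤ) - (r : ℤ) := by
        omega
      rw [e1, e2, hsym s hsd]
    rw [Finset.sum_congr rfl key,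
      Finset.sum_range_reflect
        (fun s => (BP (d + 1) ((s : ℤ) + 1) ((d : ℤ) - (r : ℤ)) : ℤ) * h s) (d + 1)]
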